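/- arXiv:2105.02349 — 3 statements merged into one kernel-verified Lean document; each statement's English description precedes it below -/
import Mathlib

section
/- For all t > 0, W'(t) = L_K(t) - b ∫_0^t L_K(t-s) W'(s) ds, where L_K(t) = t^{α-1}/(c Γ(α)); equivalently, bW' is the resolvent of bL_K, i.e. bW' = bL_K - (bL_K)*(bW') on (0,∞). -/
/-!
Writing `g_p(s) = s^(p-1)/Γ(p)`, we have `L_K = c⁻¹ g_α` and `W' = c⁻¹ Σₙ (-b/c)ⁿ g_{α(n+1)}`,
and the Beta integral gives `g_p * g_q = g_{p+q}`. Convolving the series termwise is legitimate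
because the series of absolute values is again of Mittag-Leffler type, summable by the ratio test
since log-convexity of `Γ` gives `y^α Γ(y) ≤ 2 Γ(y+α)` for `α ≤ y`. This gives
`b (L_K * W') = -c⁻¹ Σₙ (-b/c)ⁿ⁺¹ g_{α(n+2)}`, which is `L_K - W'` after a shift of index.
-/

open MeasureTheory

/-- Mittag-Leffler function `E_{α,α}(x) = Σ_{n=0}^∞ xⁿ / Γ(α(n+1))`. -/
noncomputable def mlf (α x : ℝ) : ℝ := ∑' n : ℕ, x ^ n / Real.Gamma (α * (n + 1))

/-- Derivative of the scale function: `W'(x) = c⁻¹ x^{α-1} E_{α,α}(-(b/c) x^α)`. -/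
noncomputable def Wd (α c b : ℝ) (x : ℝ) : ℝ := c⁻¹ * x ^ (α - 1) * mlf α (-(b / c) * x ^ α)

/-- `L_K(t) = t^{α-1}/(c Γ(α))`. -/
noncomputable def LK (α c : ℝ) (t : ℝ) : ℝ := t ^ (α - 1) / (c * Real.Gamma α)

open Filter Real

lemma mul_Gamma_le_rpow_mul_Gamma_add {α y : ℝ} (hα : 0 < α) (hα1 : α < 1) (hy : 0 < y) :
    y * Gamma y ≤ (y + α) ^ (1 - α) * Gamma (y + α) := by
  have hyα : 0 < y + α := by linarith
  have hΓ : 0 < Gamma (y + α) := Gamma_pos_of_pos hyα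
  have hconv := Gamma_mul_add_mul_le_rpow_Gamma_mul_rpow_Gamma hyα (by linarith : 0 < y + α + 1)
    hα (by linarith : 0 < 1 - α) (by ring)
  rw [show α * (y + α) + (1 - α) * (y + α + 1) = y + 1 by ring, Gamma_add_one hy.ne',
    Gamma_add_one hyα.ne', mul_rpow hyα.le hΓ.le] at hconv
  calc y * Gamma y ≤ _ := hconv
    _ = (y + α) ^ (1 - α) * (Gamma (y + α) ^ α * Gamma (y + α) ^ (1 - α)) := by ring
    _ = (y + α) ^ (1 - α) * Gamma (y + α) := by rw [← rpow_add hΓ, add_sub_cancel, rpow_one]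

lemma rpow_mul_Gamma_le_two_mul_Gamma_add {α y : ℝ} (hα : 0 < α) (hα1 : α < 1) (hy : α ≤ y) :
    y ^ α * Gamma y ≤ 2 * Gamma (y + α) := by
  have hy0 : 0 < y := hα.trans_le hy
  have hΓ : 0 < Gamma (y + α) := Gamma_pos_of_pos (by linarith)
  have hpow : (y + α) ^ (1 - α) ≤ 2 * y ^ (1 - α) :=
    calc (y + α) ^ (1 - α) ≤ (2 * y) ^ (1 - α) := by gcongr; linarith
      _ = 2 ^ (1 - α) * y ^ (1 - α) := mul_rpow zero_le_two hy0.le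
      _ ≤ 2 ^ (1 : ℝ) * y ^ (1 - α) := by gcongr <;> linarith
      _ = 2 * y ^ (1 - α) := by rw [rpow_one]
  have hsplit : y ^ α * y ^ (1 - α) = y := by rw [← rpow_add hy0, add_sub_cancel, rpow_one]
  refine le_of_mul_le_mul_right ?_ (rpow_pos_of_pos hy0 (1 - α))
  calc y ^ α * Gamma y * y ^ (1 - α) = y * Gamma y := by rw [mul_right_comm, hsplit]
    _ ≤ (y + α) ^ (1 - α) * Gamma (y + α) := mul_Gamma_le_rpow_mul_Gamma_add hα hα1 hy0
    _ ≤ 2 * y ^ (1 - α) * Gamma (y + α) := by gcongr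
    _ = 2 * Gamma (y + α) * y ^ (1 - α) := by ring

lemma summable_pow_div_Gamma_mul_add {α β : ℝ} (hα : 0 < α) (hα1 : α < 1) (hβ : 0 < β) (x : ℝ) :
    Summable fun n : ℕ => x ^ n / Gamma (α * n + β) := by
  have hy : Tendsto (fun n : ℕ => α * n + β) atTop atTop :=
    tendsto_atTop_add_const_right _ β (tendsto_natCast_atTop_atTop.const_mul_atTop hα)
  refine summable_of_ratio_norm_eventually_le (r := 1 / 2) (by norm_num) ?_
  filter_upwards [hy.eventually_ge_atTop α,
    ((tendsto_rpow_atTop hα).comp hy).eventually_ge_atTop (4 * |x|)] with n hαy hxy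
  set y := α * n + β
  have hΓ : 0 < Gamma y := Gamma_pos_of_pos (hα.trans_le hαy)
  have hΓ' : 0 < Gamma (y + α) := Gamma_pos_of_pos (by linarith)
  have key : 2 * |x| * Gamma y ≤ Gamma (y + α) := by
    have := (mul_le_mul_of_nonneg_right hxy hΓ.le).trans
      (rpow_mul_Gamma_le_two_mul_Gamma_add hα hα1 hαy)
    linarith
  rw [show α * ((n + 1 : ℕ) : ℝ) + β = y + α by push_cast; ring, norm_div, norm_div, norm_pow,
    norm_pow, norm_of_nonneg hΓ.le, norm_of_nonneg hΓ'.le, norm_eq_abs, pow_succ,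
    div_le_iff₀ hΓ']
  calc |x| ^ n * |x| = 1 / 2 * (|x| ^ n / Gamma y) * (2 * |x| * Gamma y) := by
        field_simp
    _ ≤ 1 / 2 * (|x| ^ n / Gamma y) * Gamma (y + α) := by gcongr

-- The Riemann–Liouville kernel: convolution with `rlKernel p` is fractional integration of order `p`.
noncomputable def rlKernel (p s : ℝ) : ℝ := s ^ (p - 1) / Gamma p

lemma integral_rpow_mul_sub_rpow {u v t : ℝ} (hu : 0 < u) (hv : 0 < v) (ht : 0 < t) :
    ∫ s in (0 : ℝ)..t, s ^ (u - 1) * (t - s) ^ (v - 1) =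
      t ^ (u + v - 1) * (Gamma u * Gamma v / Gamma (u + v)) := by
  have h := Complex.betaIntegral_scaled u v ht
  rw [Complex.betaIntegral_eq_Gamma_mul_div _ _ (by simpa) (by simpa)] at h
  apply Complex.ofReal_injective
  rw [← intervalIntegral.integral_ofReal]
  convert h using 1
  · refine intervalIntegral.integral_congr fun s hs => ?_
    rw [Set.uIcc_of_le ht.le] at hs
    rw [Complex.ofReal_mul, Complex.ofReal_cpow hs.1, Complex.ofReal_cpow (sub_nonneg.2 hs.2)]
    push_cast
    rfl
  · rw [← Complex.ofReal_add, ← Complex.ofReal_one, ← Complex.ofReal_sub,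
      ← Complex.ofReal_cpow ht.le]
    simp only [Complex.Gamma_ofReal]
    norm_cast

lemma intervalIntegrable_rpow_mul_sub_rpow {u v t : ℝ} (hu : 0 < u) (hv : 0 < v) (ht : 0 < t) :
    IntervalIntegrable (fun s => s ^ (u - 1) * (t - s) ^ (v - 1)) volume 0 t := by
  -- Each factor is singular at one endpoint only, so split at `t / 2`.
  have left : ∀ {u v : ℝ}, 0 < u →
      IntervalIntegrable (fun s => s ^ (u - 1) * (t - s) ^ (v - 1)) volume 0 (t / 2) := by
    intro u v hu
    refine (intervalIntegral.intervalIntegrable_rpow' (by linarith)).mul_continuousOn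
      (ContinuousOn.rpow_const (by fun_prop) fun s hs => Or.inl ?_)
    rw [Set.uIcc_of_le (by linarith)] at hs
    linarith [hs.2]
  have right := (left (v := u) hv).comp_sub_left t
  rw [sub_zero, sub_half] at right
  simp only [sub_sub_cancel, mul_comm] at right
  exact (left hu).trans right.symm

lemma intervalIntegral_rlKernel_mul_rlKernel {p q t : ℝ} (hp : 0 < p) (hq : 0 < q) (ht : 0 < t) :
    ∫ s in (0 : ℝ)..t, rlKernel p (t - s) * rlKernel q s = rlKernel (p + q) t := by
  have hΓ := (Gamma_pos_of_pos (add_pos hp hq)).ne'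
  simp only [rlKernel, div_mul_div_comm, intervalIntegral.integral_div, mul_comm ((_ - _) ^ _),
    integral_rpow_mul_sub_rpow hq hp ht, add_comm q p]
  field_simp

lemma intervalIntegrable_rlKernel_mul_rlKernel {p q t : ℝ} (hp : 0 < p) (hq : 0 < q) (ht : 0 < t) :
    IntervalIntegrable (fun s => rlKernel p (t - s) * rlKernel q s) volume 0 t := by
  simp only [rlKernel, div_mul_div_comm, mul_comm ((t - _) ^ (p - 1))]
  exact (intervalIntegrable_rpow_mul_sub_rpow hq hp ht).div_const _

lemma rlKernel_nonneg {p s : ℝ} (hp : 0 < p) (hs : 0 ≤ s) : 0 ≤ rlKernel p s :=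
  div_nonneg (rpow_nonneg hs _) (Gamma_pos_of_pos hp).le

lemma pow_mul_rlKernel {s : ℝ} (hs : 0 < s) (x α β : ℝ) (n : ℕ) :
    x ^ n * rlKernel (α * n + β) s = s ^ (β - 1) * ((x * s ^ α) ^ n / Gamma (α * n + β)) := by
  rw [rlKernel, mul_pow, ← rpow_natCast (s ^ α), ← rpow_mul hs.le,
    show α * n + β - 1 = (β - 1) + α * n by ring, rpow_add hs]
  ring

lemma summable_pow_mul_rlKernel {α β t : ℝ} (hα : 0 < α) (hα1 : α < 1) (hβ : 0 < β) (ht : 0 < t)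
    (x : ℝ) : Summable fun n : ℕ => x ^ n * rlKernel (α * n + β) t := by
  simp_rw [pow_mul_rlKernel ht]
  exact (summable_pow_div_Gamma_mul_add hα hα1 hβ _).mul_left _

lemma intervalIntegral_rlKernel_mul_tsum {α β γ t : ℝ} (hα : 0 < α) (hα1 : α < 1) (hβ : 0 < β)
    (hγ : 0 < γ) (ht : 0 < t) (x : ℝ) :
    ∫ s in (0 : ℝ)..t, rlKernel γ (t - s) * ∑' n : ℕ, x ^ n * rlKernel (α * n + β) s =
      ∑' n : ℕ, x ^ n * rlKernel (α * n + β + γ) t := by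
  have hpos (n : ℕ) : 0 < α * n + β := by positivity
  have hterm (y : ℝ) (n : ℕ) :
      ∫ s in (0 : ℝ)..t, rlKernel γ (t - s) * (y ^ n * rlKernel (α * n + β) s) =
        y ^ n * rlKernel (α * n + β + γ) t := by
    simp only [mul_left_comm _ (y ^ n), intervalIntegral.integral_const_mul,
      intervalIntegral_rlKernel_mul_rlKernel hγ (hpos n) ht, add_comm γ]
  have hint (n : ℕ) : IntegrableOn
      (fun s => rlKernel γ (t - s) * (x ^ n * rlKernel (α * n + β) s)) (Set.Ioc 0 t) := by
    simp only [mul_left_comm _ (x ^ n)]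
    exact ((intervalIntegrable_iff_integrableOn_Ioc_of_le ht.le).1
      (intervalIntegrable_rlKernel_mul_rlKernel hγ (hpos n) ht)).const_mul _
  have hnorm (n : ℕ) : ∫ s in Set.Ioc 0 t, ‖rlKernel γ (t - s) * (x ^ n * rlKernel (α * n + β) s)‖ =
      |x| ^ n * rlKernel (α * n + (β + γ)) t := by
    rw [← add_assoc, ← hterm |x|, intervalIntegral.integral_of_le ht.le]
    refine setIntegral_congr_fun measurableSet_Ioc fun s hs => ?_
    rw [norm_mul, norm_mul, norm_pow, norm_eq_abs x,
      norm_of_nonneg (rlKernel_nonneg hγ (sub_nonneg.2 hs.2)),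
      norm_of_nonneg (rlKernel_nonneg (hpos n) hs.1.le)]
  simp only [intervalIntegral.integral_of_le ht.le, ← hterm x, ← tsum_mul_left]
  rw [← integral_tsum_of_summable_integral_norm hint ?_]
  simpa only [hnorm] using summable_pow_mul_rlKernel hα hα1 (add_pos hβ hγ) ht |x|

lemma Wd_eq_tsum {α c b s : ℝ} (hs : 0 < s) :
    Wd α c b s = c⁻¹ * ∑' n : ℕ, (-(b / c)) ^ n * rlKernel (α * n + α) s := by
  simp only [Wd, mlf, pow_mul_rlKernel hs, tsum_mul_left, mul_add_one, mul_assoc]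

lemma LK_eq_inv_mul_rlKernel (α c t : ℝ) : LK α c t = c⁻¹ * rlKernel α t := by
  rw [LK, rlKernel, mul_comm c, ← div_div, div_eq_inv_mul]

theorem Wd_resolvent_of_LK_general (α c b : ℝ) (hα : 0 < α) (hα1 : α < 1) :
    ∀ t > (0:ℝ),
      Wd α c b t = LK α c t - b * ∫ s in (0:ℝ)..t, LK α c (t - s) * Wd α c b s := by
  intro t ht
  have hconv : ∫ s in (0 : ℝ)..t, LK α c (t - s) * Wd α c b s =
      c⁻¹ * c⁻¹ * ∑' n : ℕ, (-(b / c)) ^ n * rlKernel (α * n + α + α) t := by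
    rw [← intervalIntegral_rlKernel_mul_tsum hα hα1 hα hα ht, ← intervalIntegral.integral_const_mul]
    -- `Wd_eq_tsum` may fail at `s = 0`, where a term `0 ^ 0 = 1` can survive.
    refine intervalIntegral.integral_congr_ae (ae_of_all _ fun s hs => ?_)
    rw [Set.uIoc_of_le ht.le] at hs
    rw [LK_eq_inv_mul_rlKernel, Wd_eq_tsum hs.1]
    ring
  have hshift : ∑' n : ℕ, (-(b / c)) ^ (n + 1) * rlKernel (α * ↑(n + 1) + α) t =
      -(b * c⁻¹) * ∑' n : ℕ, (-(b / c)) ^ n * rlKernel (α * n + α + α) t := by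
    rw [← tsum_mul_left]
    refine tsum_congr fun n => ?_
    rw [pow_succ, Nat.cast_succ, mul_add_one]
    ring
  rw [Wd_eq_tsum ht, hconv, LK_eq_inv_mul_rlKernel,
    (summable_pow_mul_rlKernel hα hα1 hα ht _).tsum_eq_zero_add, hshift]
  simp only [pow_zero, one_mul, Nat.cast_zero, mul_zero, zero_add]
  ring

theorem Wd_resolvent_of_LK (α c b : ℝ) (hα : 0 < α) (hα1 : α < 1) (hc : 0 < c) (hb : 0 ≤ b) :
    ∀ t > (0:ℝ),
      Wd α c b t = LK α c t - b * ∫ s in (0:ℝ)..t, LK α c (t - s) * Wd α c b s :=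
  Wd_resolvent_of_LK_general α c b hα hα1
end

section
/- Let α ∈ (0,1), C₀ > 0, and let W₀ : ℝ → ℝ satisfy W₀(x) = 0 for x ≤ 0 and be twice differentiable on (0,∞) with 0 ≤ W₀'(t) ≤ C₀ t^{α-1} and |W₀''(t)| ≤ C₀ t^{α-2} for all t > 0. Then for every p ≥ 2 there exists a constant C > 0 such that for all h ∈ (0,1], ∫_0^1 ∫_0^s |W₀(s+h) - W₀(s+h-y) - W₀(s) + W₀(s-y)|^p · y^{-α-2} dy ds ≤ C h^{(p-1)α}. -/
open MeasureTheory Set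

/-!
Write `D = ∇_y Δ_h W₀ (s)`. Since `W₀` is nondecreasing and `C₀ t ^ α / α - W₀ t` is
nondecreasing, every increment of `W₀` of length `δ` lies in `[0, C₀ δ ^ α / α]`, so
`|D| ≤ C₀ min(y, h) ^ α / α`. The bounds on `W₀'` and `W₀''` give
`|W₀'(t + h) - W₀'(t)| ≤ C₀ t ^ (α - 2) min(t, h)`, and the mean value theorem for
`x ↦ W₀(x + h) - W₀(x)` on `[s - y, s]` then gives `|D| ≲ s ^ (α - 2) min(s, h) y` when
`y ≤ s / 2`. Using the second bound for `y ≤ s / 2` and the first for `y > s / 2`, the inner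
integral is `≲ s ^ (pα - p - α - 1) min(s, h) ^ p + s ^ (-α - 1) min(s, h) ^ (pα)`, and
`∫₀¹ s ^ a min(s, h) ^ b ds ≲ h ^ (a + b + 1)` whenever `a < -1 < a + b`; in both terms
`a + b + 1 = (p - 1) α`.
-/

theorem intervalIntegral.integral_mono_of_nonneg_Ioo {f g : ℝ → ℝ} {a b : ℝ} (hab : a ≤ b)
    (hg : IntervalIntegrable g volume a b) (hf : ∀ x ∈ Ioo a b, 0 ≤ f x)
    (hfg : ∀ x ∈ Ioo a b, f x ≤ g x) : ∫ x in a..b, f x ≤ ∫ x in a..b, g x := by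
  simp only [intervalIntegral.integral_of_le hab, integral_Ioc_eq_integral_Ioo]
  exact integral_mono_of_nonneg (ae_restrict_of_forall_mem measurableSet_Ioo hf)
    (hg.1.mono_set Ioo_subset_Ioc_self) (ae_restrict_of_forall_mem measurableSet_Ioo hfg)

theorem monotoneOn_Ioi_of_hasDerivAt_nonneg {f f' : ℝ → ℝ} {a : ℝ}
    (hf : ∀ t > a, HasDerivAt f (f' t) t) (hf' : ∀ t > a, 0 ≤ f' t) : MonotoneOn f (Ioi a) :=
  monotoneOn_of_hasDerivWithinAt_nonneg (convex_Ioi a)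
    (fun t ht => (hf t ht).continuousAt.continuousWithinAt)
    (fun t ht => by rw [interior_Ioi] at ht ⊢; exact (hf t ht).hasDerivWithinAt)
    (fun t ht => by rw [interior_Ioi] at ht; exact hf' t ht)

theorem intervalIntegrable_rpow_mul_min_rpow {a b h u : ℝ} (hab : -1 < a + b) (hb : 0 ≤ b)
    (hh : 0 ≤ h) (hu : 0 ≤ u) :
    IntervalIntegrable (fun s => s ^ a * min s h ^ b) volume 0 u := by
  refine (intervalIntegral.intervalIntegrable_rpow' hab).mono_fun'
    (by fun_prop : Measurable fun s : ℝ => s ^ a * min s h ^ b).aestronglyMeasurable ?_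
  rw [uIoc_of_le hu]
  filter_upwards [ae_restrict_mem measurableSet_Ioc] with s ⟨hs, _⟩
  have hm : 0 ≤ min s h := le_min hs.le hh
  rw [Real.norm_eq_abs, abs_of_nonneg (by positivity), Real.rpow_add hs]
  gcongr
  exact min_le_left s h

theorem exists_integral_rpow_mul_min_rpow_le {a b : ℝ} (ha : a < -1) (hab : -1 < a + b) :
    ∃ K > 0, ∀ h, 0 < h → h ≤ 1 →
      ∫ s in 0..1, s ^ a * min s h ^ b ≤ K * h ^ (a + b + 1) := by
  have hb : 0 < b := by linarith
  refine ⟨1 / (a + b + 1) - 1 / (a + 1), sub_pos.2 ((div_neg_of_pos_of_neg one_pos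
    (by linarith)).trans (div_pos one_pos (by linarith))), fun h hh hh1 => ?_⟩
  have hI := intervalIntegrable_rpow_mul_min_rpow hab hb.le hh.le zero_le_one
  have hmem : h ∈ uIcc (0 : ℝ) 1 := by rw [uIcc_of_le zero_le_one]; exact ⟨hh.le, hh1⟩
  rw [← intervalIntegral.integral_add_adjacent_intervals
    (hI.mono_set (uIcc_subset_uIcc left_mem_uIcc hmem))
    (hI.mono_set (uIcc_subset_uIcc hmem right_mem_uIcc))]
  have e₁ : ∫ s in 0..h, s ^ a * min s h ^ b = h ^ (a + b + 1) / (a + b + 1) := by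
    calc ∫ s in 0..h, s ^ a * min s h ^ b = ∫ s in 0..h, s ^ (a + b) := by
          simp only [intervalIntegral.integral_of_le hh.le]
          refine setIntegral_congr_fun measurableSet_Ioc fun s ⟨hs, hsh⟩ => ?_
          simp only [min_eq_left hsh, Real.rpow_add hs]
      _ = _ := by rw [integral_rpow (Or.inl hab), Real.zero_rpow (by linarith), sub_zero]
  have e₂ : ∫ s in h..1, s ^ a * min s h ^ b = (1 - h ^ (a + 1)) / (a + 1) * h ^ b := by
    calc ∫ s in h..1, s ^ a * min s h ^ b = ∫ s in h..1, s ^ a * h ^ b := by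
          refine intervalIntegral.integral_congr fun s hs => ?_
          rw [uIcc_of_le hh1] at hs
          simp only [min_eq_right hs.1]
      _ = _ := by
          rw [intervalIntegral.integral_mul_const, integral_rpow (Or.inr ⟨ha.ne, fun h0 => by
            rw [uIcc_of_le hh1] at h0; exact hh.not_ge h0.1⟩), Real.one_rpow]
  have hsplit : h ^ (a + b + 1) = h ^ (a + 1) * h ^ b := by
    rw [← Real.rpow_add hh]; ring_nf
  have hneg : h ^ b / (a + 1) ≤ 0 :=
    div_nonpos_of_nonneg_of_nonpos (by positivity) (by linarith)
  calc _ = (1 / (a + b + 1) - 1 / (a + 1)) * h ^ (a + b + 1) + h ^ b / (a + 1) := by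
        rw [e₁, e₂, hsplit]; ring
    _ ≤ _ := by linarith

/-- `∇_y Δ_h W (s)`. -/
def mixedDiff (W : ℝ → ℝ) (h y s : ℝ) : ℝ := W (s + h) - W (s + h - y) - W s + W (s - y)

section

variable {W W' W'' : ℝ → ℝ} {α C : ℝ}

theorem increment_mem_Icc (hα : 0 < α) (hα1 : α ≤ 1) (hC : 0 ≤ C)
    (hW : ∀ t > 0, HasDerivAt W (W' t) t) (hW'0 : ∀ t > 0, 0 ≤ W' t)
    (hW'le : ∀ t > 0, W' t ≤ C * t ^ (α - 1)) {x δ : ℝ} (hx : 0 < x) (hδ : 0 ≤ δ) :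
    W (x + δ) - W x ∈ Icc 0 (C / α * δ ^ α) := by
  have hxδ : x ≤ x + δ := le_add_of_nonneg_right hδ
  have hxδ' : x + δ ∈ Ioi 0 := hx.trans_le hxδ
  constructor
  · exact sub_nonneg.2 (monotoneOn_Ioi_of_hasDerivAt_nonneg hW hW'0 hx hxδ' hxδ)
  · have hG : MonotoneOn (fun t => C / α * t ^ α - W t) (Ioi 0) :=
      monotoneOn_Ioi_of_hasDerivAt_nonneg (f' := fun t => C * t ^ (α - 1) - W' t)
        (fun t ht => (((Real.hasDerivAt_rpow_const (Or.inl ht.ne')).const_mul (C / α)).sub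
          (hW t ht)).congr_deriv (by field_simp))
        (fun t ht => sub_nonneg.2 (hW'le t ht))
    have hGx := hG hx hxδ' hxδ
    calc W (x + δ) - W x ≤ C / α * ((x + δ) ^ α - x ^ α) := by
          simp only at hGx
          linarith
      _ ≤ C / α * δ ^ α := by
          gcongr
          linarith [Real.rpow_add_le_add_rpow hx.le hδ hα.le hα1]

theorem abs_mixedDiff_le_min_rpow (hα : 0 < α) (hα1 : α ≤ 1) (hC : 0 ≤ C)
    (hW : ∀ t > 0, HasDerivAt W (W' t) t) (hW'0 : ∀ t > 0, 0 ≤ W' t)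
    (hW'le : ∀ t > 0, W' t ≤ C * t ^ (α - 1)) {s y h : ℝ} (hy : 0 ≤ y) (hys : y < s)
    (hh : 0 ≤ h) : |mixedDiff W h y s| ≤ C / α * min y h ^ α := by
  have hinc {x δ : ℝ} (hx : 0 < x) (hδ : 0 ≤ δ) :=
    increment_mem_Icc hα hα1 hC hW hW'0 hW'le hx hδ
  rcases le_total y h with hyh | hhy
  · have h₁ := hinc (x := s + h - y) (by linarith) hy
    have h₂ := hinc (x := s - y) (by linarith) hy
    rw [sub_add_cancel] at h₁ h₂
    rw [min_eq_left hyh, show mixedDiff W h y s =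
      (W (s + h) - W (s + h - y)) - (W s - W (s - y)) by unfold mixedDiff; ring]
    exact abs_sub_le_of_nonneg_of_le h₁.1 h₁.2 h₂.1 h₂.2
  · have h₁ := hinc (x := s) (by linarith) hh
    have h₂ := hinc (x := s - y) (by linarith) hh
    rw [sub_add_eq_add_sub] at h₂
    rw [min_eq_right hhy, show mixedDiff W h y s =
      (W (s + h) - W s) - (W (s + h - y) - W (s - y)) by unfold mixedDiff; ring]
    exact abs_sub_le_of_nonneg_of_le h₁.1 h₁.2 h₂.1 h₂.2

theorem abs_deriv_add_sub_deriv_le (hα1 : α ≤ 1) (hC : 0 ≤ C)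
    (hW' : ∀ t > 0, HasDerivAt W' (W'' t) t) (hW'0 : ∀ t > 0, 0 ≤ W' t)
    (hW'le : ∀ t > 0, W' t ≤ C * t ^ (α - 1))
    (hW''le : ∀ t > 0, |W'' t| ≤ C * t ^ (α - 2))
    {t h : ℝ} (ht : 0 < t) (hh : 0 ≤ h) :
    |W' (t + h) - W' t| ≤ C * t ^ (α - 2) * min t h := by
  have hth : t ≤ t + h := le_add_of_nonneg_right hh
  rcases le_total t h with hth' | hht
  · rw [min_eq_left hth', mul_assoc, ← Real.rpow_add_one ht.ne',
      show α - 2 + 1 = α - 1 by ring]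
    have hdec : C * (t + h) ^ (α - 1) ≤ C * t ^ (α - 1) :=
      mul_le_mul_of_nonneg_left (Real.rpow_le_rpow_of_nonpos ht hth (by linarith)) hC
    exact abs_sub_le_of_nonneg_of_le (hW'0 _ (ht.trans_le hth))
      ((hW'le _ (ht.trans_le hth)).trans hdec) (hW'0 t ht) (hW'le t ht)
  · rw [min_eq_right hht]
    have hmvt := Convex.norm_image_sub_le_of_norm_hasDerivWithin_le (s := Icc t (t + h))
      (fun u hu => (hW' u (ht.trans_le hu.1)).hasDerivWithinAt)
      (fun u hu => (hW''le u (ht.trans_le hu.1)).trans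
        (mul_le_mul_of_nonneg_left (Real.rpow_le_rpow_of_nonpos ht hu.1 (by linarith)) hC))
      (convex_Icc t (t + h)) (left_mem_Icc.2 hth) (right_mem_Icc.2 hth)
    simpa [Real.norm_eq_abs, abs_of_nonneg hh] using hmvt

theorem abs_mixedDiff_le_of_le_half (hα1 : α ≤ 1) (hC : 0 ≤ C)
    (hW : ∀ t > 0, HasDerivAt W (W' t) t) (hW' : ∀ t > 0, HasDerivAt W' (W'' t) t)
    (hW'0 : ∀ t > 0, 0 ≤ W' t) (hW'le : ∀ t > 0, W' t ≤ C * t ^ (α - 1))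
    (hW''le : ∀ t > 0, |W'' t| ≤ C * t ^ (α - 2)) {s y h : ℝ} (hy : 0 < y)
    (hys : y ≤ s / 2)
    (hh : 0 ≤ h) : |mixedDiff W h y s| ≤ 2 ^ (2 - α) * C * s ^ (α - 2) * min s h * y := by
  have hs : 0 < s := by linarith
  have hF : ∀ t ∈ Icc (s - y) s,
      HasDerivWithinAt (fun x => W (x + h) - W x) (W' (t + h) - W' t) (Icc (s - y) s) t :=
    fun t ht => (((hW _ (by linarith [ht.1])).comp_add_const t h).sub
      (hW t (by linarith [ht.1]))).hasDerivWithinAt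
  have hF' : ∀ t ∈ Icc (s - y) s,
      ‖W' (t + h) - W' t‖ ≤ 2 ^ (2 - α) * C * s ^ (α - 2) * min s h := by
    intro t ⟨hst, hts⟩
    have ht : s / 2 ≤ t := by linarith
    calc ‖W' (t + h) - W' t‖ ≤ C * t ^ (α - 2) * min t h :=
          abs_deriv_add_sub_deriv_le hα1 hC hW' hW'0 hW'le hW''le (by linarith) hh
      _ ≤ C * (s / 2) ^ (α - 2) * min s h :=
          mul_le_mul (mul_le_mul_of_nonneg_left
            (Real.rpow_le_rpow_of_nonpos (by linarith) ht (by linarith)) hC)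
            (min_le_min_right h hts) (le_min (by linarith) hh)
            (mul_nonneg hC (Real.rpow_nonneg (by linarith) _))
      _ = 2 ^ (2 - α) * C * s ^ (α - 2) * min s h := by
          rw [Real.div_rpow hs.le zero_le_two, show 2 - α = -(α - 2) by ring,
            Real.rpow_neg zero_le_two]
          ring
  have hmvt := Convex.norm_image_sub_le_of_norm_hasDerivWithin_le hF hF' (convex_Icc (s - y) s)
    (left_mem_Icc.2 (by linarith)) (right_mem_Icc.2 (by linarith))
  rw [sub_sub_cancel, sub_add_eq_add_sub, Real.norm_eq_abs, Real.norm_eq_abs,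
    abs_of_pos hy] at hmvt
  rw [show mixedDiff W h y s = W (s + h) - W s - (W (s + h - y) - W (s - y)) by
    unfold mixedDiff; ring]
  exact hmvt

theorem abs_mixedDiff_rpow_mul_rpow_le (hα : 0 < α) (hα1 : α ≤ 1) (hC : 0 ≤ C)
    (hW : ∀ t > 0, HasDerivAt W (W' t) t) (hW' : ∀ t > 0, HasDerivAt W' (W'' t) t)
    (hW'0 : ∀ t > 0, 0 ≤ W' t) (hW'le : ∀ t > 0, W' t ≤ C * t ^ (α - 1))
    (hW''le : ∀ t > 0, |W'' t| ≤ C * t ^ (α - 2)) {p s y h : ℝ} (hp : 0 ≤ p) (hy : 0 < y)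
    (hys : y < s) (hh : 0 ≤ h) :
    |mixedDiff W h y s| ^ p * y ^ (-α - 2) ≤
      (2 ^ (2 - α) * C) ^ p * s ^ ((α - 2) * p) * min s h ^ p * y ^ (p - α - 2) +
        2 ^ (α + 2) * (C / α) ^ p * s ^ (-α - 2) * min s h ^ (α * p) := by
  have hs : 0 < s := hy.trans hys
  have hm : 0 ≤ min s h := le_min hs.le hh
  rcases le_or_gt y (s / 2) with hys2 | hys2
  · have hD := abs_mixedDiff_le_of_le_half hα1 hC hW hW' hW'0 hW'le hW''le hy hys2 hh
    have hy' : y ^ p * y ^ (-α - 2) = y ^ (p - α - 2) := by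
      rw [← Real.rpow_add hy]; ring_nf
    calc |mixedDiff W h y s| ^ p * y ^ (-α - 2)
        ≤ (2 ^ (2 - α) * C * s ^ (α - 2) * min s h * y) ^ p * y ^ (-α - 2) := by gcongr
      _ = (2 ^ (2 - α) * C) ^ p * s ^ ((α - 2) * p) * min s h ^ p * y ^ (p - α - 2) := by
          rw [Real.mul_rpow (by positivity) hy.le, Real.mul_rpow (by positivity) hm,
            Real.mul_rpow (by positivity) (by positivity), ← Real.rpow_mul hs.le, ← hy']
          ring
      _ ≤ _ := le_add_of_nonneg_right (by positivity)
  · have hD : |mixedDiff W h y s| ≤ C / α * min s h ^ α :=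
      (abs_mixedDiff_le_min_rpow hα hα1 hC hW hW'0 hW'le hy.le hys hh).trans (by gcongr)
    have hy' : y ^ (-α - 2) ≤ 2 ^ (α + 2) * s ^ (-α - 2) := by
      calc y ^ (-α - 2) ≤ (s / 2) ^ (-α - 2) :=
            Real.rpow_le_rpow_of_nonpos (by linarith) hys2.le (by linarith)
        _ = 2 ^ (α + 2) * s ^ (-α - 2) := by
            rw [Real.div_rpow hs.le zero_le_two, show α + 2 = -(-α - 2) by ring,
              Real.rpow_neg zero_le_two]
            ring
    calc |mixedDiff W h y s| ^ p * y ^ (-α - 2)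
        ≤ (C / α * min s h ^ α) ^ p * (2 ^ (α + 2) * s ^ (-α - 2)) := by gcongr
      _ = 2 ^ (α + 2) * (C / α) ^ p * s ^ (-α - 2) * min s h ^ (α * p) := by
          rw [Real.mul_rpow (by positivity) (by positivity), ← Real.rpow_mul hm]
          ring
      _ ≤ _ := le_add_of_nonneg_left (by positivity)

theorem integral_abs_mixedDiff_rpow_mul_rpow_le (hα : 0 < α) (hα1 : α ≤ 1) (hC : 0 ≤ C)
    (hW : ∀ t > 0, HasDerivAt W (W' t) t) (hW' : ∀ t > 0, HasDerivAt W' (W'' t) t)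
    (hW'0 : ∀ t > 0, 0 ≤ W' t) (hW'le : ∀ t > 0, W' t ≤ C * t ^ (α - 1))
    (hW''le : ∀ t > 0, |W'' t| ≤ C * t ^ (α - 2)) {p s h : ℝ} (hp : 1 + α < p) (hs : 0 < s)
    (hh : 0 ≤ h) :
    ∫ y in 0..s, |mixedDiff W h y s| ^ p * y ^ (-α - 2) ≤
      (2 ^ (2 - α) * C) ^ p / (p - α - 1) * (s ^ (p * α - p - α - 1) * min s h ^ p) +
        2 ^ (α + 2) * (C / α) ^ p * (s ^ (-α - 1) * min s h ^ (α * p)) := by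
  have hpα : 0 < p - α - 1 := by linarith
  have hint : IntervalIntegrable (fun y => y ^ (p - α - 2)) volume 0 s :=
    intervalIntegral.intervalIntegrable_rpow' (by linarith)
  calc ∫ y in 0..s, |mixedDiff W h y s| ^ p * y ^ (-α - 2)
      ≤ ∫ y in 0..s,
          ((2 ^ (2 - α) * C) ^ p * s ^ ((α - 2) * p) * min s h ^ p * y ^ (p - α - 2) +
            2 ^ (α + 2) * (C / α) ^ p * s ^ (-α - 2) * min s h ^ (α * p)) :=
        intervalIntegral.integral_mono_of_nonneg_Ioo hs.le
          ((hint.const_mul _).add intervalIntegrable_const)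
          (fun y hy => mul_nonneg (by positivity) (Real.rpow_nonneg hy.1.le _))
          (fun y hy => abs_mixedDiff_rpow_mul_rpow_le hα hα1 hC hW hW' hW'0 hW'le hW''le
            (by linarith) hy.1 hy.2 hh)
    _ = _ := by
      rw [intervalIntegral.integral_add (hint.const_mul _) intervalIntegrable_const,
        intervalIntegral.integral_const_mul, intervalIntegral.integral_const,
        integral_rpow (Or.inl (by linarith)), Real.zero_rpow (by linarith), smul_eq_mul,
        sub_zero, sub_zero, show p - α - 2 + 1 = p - α - 1 by ring]
      have e₁ : s ^ ((α - 2) * p) * s ^ (p - α - 1) = s ^ (p * α - p - α - 1) := by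
        rw [← Real.rpow_add hs]; ring_nf
      have e₂ : s ^ (-α - 2) * s = s ^ (-α - 1) := by
        rw [← Real.rpow_add_one hs.ne']; ring_nf
      rw [← e₁, ← e₂]
      field_simp

end

theorem scale_function_double_increment_integral_bound_general
    (α C₀ : ℝ) (hα : 0 < α) (hα1 : α < 1) (hC₀ : 0 < C₀)
    (W₀ W₀' W₀'' : ℝ → ℝ)
    (hderiv : ∀ t > (0:ℝ), HasDerivAt W₀ (W₀' t) t)
    (hderiv2 : ∀ t > (0:ℝ), HasDerivAt W₀' (W₀'' t) t)
    (hnn : ∀ t > (0:ℝ), 0 ≤ W₀' t)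
    (hbd : ∀ t > (0:ℝ), W₀' t ≤ C₀ * t ^ (α - 1))
    (hbd2 : ∀ t > (0:ℝ), |W₀'' t| ≤ C₀ * t ^ (α - 2)) :
    ∀ p ≥ (2:ℝ), ∃ C > (0:ℝ), ∀ h : ℝ, 0 < h → h ≤ 1 →
      (∫ s in (0:ℝ)..1, ∫ y in (0:ℝ)..s,
        |W₀ (s + h) - W₀ (s + h - y) - W₀ s + W₀ (s - y)| ^ p * y ^ (-α - 2))
      ≤ C * h ^ ((p - 1) * α) := by
  intro p hp
  have hαp : α < α * p := by nlinarith
  obtain ⟨K₁, hK₁, hI₁⟩ := exists_integral_rpow_mul_min_rpow_le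
    (a := p * α - p - α - 1) (b := p) (by nlinarith) (by linarith)
  obtain ⟨K₂, hK₂, hI₂⟩ := exists_integral_rpow_mul_min_rpow_le
    (a := -α - 1) (b := α * p) (by linarith) (by linarith)
  rw [show p * α - p - α - 1 + p + 1 = (p - 1) * α by ring] at hI₁
  rw [show -α - 1 + α * p + 1 = (p - 1) * α by ring] at hI₂
  set A := (2 ^ (2 - α) * C₀) ^ p / (p - α - 1)
  set B := 2 ^ (α + 2) * (C₀ / α) ^ p
  have hA : 0 < A := div_pos (by positivity) (by linarith)
  refine ⟨A * K₁ + B * K₂, by positivity, fun h hh hh1 => ?_⟩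
  have hi₁ := intervalIntegrable_rpow_mul_min_rpow (a := p * α - p - α - 1) (b := p)
    (by linarith) (by linarith) hh.le zero_le_one
  have hi₂ := intervalIntegrable_rpow_mul_min_rpow (a := -α - 1) (b := α * p)
    (by linarith) (by linarith) hh.le zero_le_one
  calc _ ≤ ∫ s in 0..1, (A * (s ^ (p * α - p - α - 1) * min s h ^ p) +
          B * (s ^ (-α - 1) * min s h ^ (α * p))) :=
        intervalIntegral.integral_mono_of_nonneg_Ioo zero_le_one
          ((hi₁.const_mul A).add (hi₂.const_mul B))
          (fun s hs => intervalIntegral.integral_nonneg hs.1.le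
            fun y hy => mul_nonneg (by positivity) (Real.rpow_nonneg hy.1 _))
          (fun s hs => integral_abs_mixedDiff_rpow_mul_rpow_le hα hα1.le hC₀.le hderiv hderiv2
            hnn hbd hbd2 (by linarith) hs.1 hh.le)
    _ = A * (∫ s in 0..1, s ^ (p * α - p - α - 1) * min s h ^ p) +
          B * ∫ s in 0..1, s ^ (-α - 1) * min s h ^ (α * p) := by
        rw [intervalIntegral.integral_add (hi₁.const_mul A) (hi₂.const_mul B),
          intervalIntegral.integral_const_mul, intervalIntegral.integral_const_mul]
    _ ≤ _ := by linear_combination A * hI₁ h hh hh1 + B * hI₂ h hh hh1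

theorem scale_function_double_increment_integral_bound
    (α C₀ : ℝ) (hα : 0 < α) (hα1 : α < 1) (hC₀ : 0 < C₀)
    (W₀ W₀' W₀'' : ℝ → ℝ) (hzero : ∀ x ≤ (0:ℝ), W₀ x = 0)
    (hderiv : ∀ t > (0:ℝ), HasDerivAt W₀ (W₀' t) t)
    (hderiv2 : ∀ t > (0:ℝ), HasDerivAt W₀' (W₀'' t) t)
    (hnn : ∀ t > (0:ℝ), 0 ≤ W₀' t)
    (hbd : ∀ t > (0:ℝ), W₀' t ≤ C₀ * t ^ (α - 1))
    (hbd2 : ∀ t > (0:ℝ), |W₀'' t| ≤ C₀ * t ^ (α - 2)) :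
    ∀ p ≥ (2:ℝ), ∃ C > (0:ℝ), ∀ h : ℝ, 0 < h → h ≤ 1 →
      (∫ s in (0:ℝ)..1, ∫ y in (0:ℝ)..s,
        |W₀ (s + h) - W₀ (s + h - y) - W₀ s + W₀ (s - y)| ^ p * y ^ (-α - 2))
      ≤ C * h ^ ((p - 1) * α) :=
  scale_function_double_increment_integral_bound_general α C₀ hα hα1 hC₀ W₀ W₀' W₀'' hderiv hderiv2
    hnn hbd hbd2
end

section
/- Let α ∈ (0,1), C₀ > 0, and let W₀ : ℝ → ℝ satisfy W₀(x) = 0 for x ≤ 0 and be differentiable on (0,∞) with 0 ≤ W₀'(t) ≤ C₀ t^{α-1} for all t > 0. Then for every p ≥ 2 there exists a constant C > 0 such that for all h ∈ (0,1], ∫_0^1 ∫_s^{s+h} |W₀(s+h) - W₀(s+h-y) - W₀(s)|^p · y^{-α-2} dy ds ≤ C h^{(p-1)α}. -/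
/-!
Integrating `0 ≤ W₀' t ≤ C₀ t^(α-1)` shows that `W₀` is nondecreasing on `(0, ∞)` with Hölder
increments `|W₀ b - W₀ a| ≤ K (b - a)^α`, `K = C₀ / α`. Two cases remain.

If `|W₀ t| ≤ K t^α`, the Hölder bound extends to `[0, ∞)` through `W₀ 0 = 0`, and then the mixed
increment `W₀ (s + h) - W₀ (s + h - y) - W₀ s` is at most `2K y^α`, and at most `2K h^α` once
`h ≤ s`. For `s ≤ h` we trade `y^((p-1)α - 2) ≤ (2h)^((p-1)α - γ) y^(γ - 2)` with `0 < γ < 1`, so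
that both the `y`-integral (`≲ s^(γ-1)`) and the `s`-integral over `(0, h)` converge; for `s ≥ h`
the `y`-integral is `≲ h^(αp+1) s^(-α-2)`. Both pieces are `≲ h^((p-1)α)`.

Otherwise `W₀` jumps at `0`: `|W₀ s| ≥ δ > 0` for small `s`, so the mixed increment stays
`≥ δ / 2` for `y ∈ [s, 2s]`, the inner integral is `≳ s^(-α-1)`, the outer integrand is not
integrable, and the outer integral is `0` by convention.
-/

open MeasureTheory

open Set Filter Topology intervalIntegral

theorem sub_le_sub_of_hasDerivAt_le {f g f' g' : ℝ → ℝ} {D : Set ℝ} (hD : Convex ℝ D)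
    (hDo : IsOpen D) (hf : ∀ x ∈ D, HasDerivAt f (f' x) x) (hg : ∀ x ∈ D, HasDerivAt g (g' x) x)
    (hfg : ∀ x ∈ D, f' x ≤ g' x) {a b : ℝ} (ha : a ∈ D) (hb : b ∈ D) (hab : a ≤ b) :
    f b - f a ≤ g b - g a := by
  have hmono : MonotoneOn (g - f) D := by
    refine monotoneOn_of_hasDerivWithinAt_nonneg hD (f' := g' - f')
      (fun x hx => ((hg x hx).sub (hf x hx)).continuousAt.continuousWithinAt)
      (fun x hx => ?_) (fun x hx => ?_) <;> rw [hDo.interior_eq] at hx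
    · exact ((hg x hx).sub (hf x hx)).hasDerivWithinAt
    · exact sub_nonneg.2 (hfg x hx)
  have := hmono ha hb hab
  simp only [Pi.sub_apply] at this
  linarith

theorem sub_le_mul_rpow_sub_rpow_of_deriv_le {W W' : ℝ → ℝ} {α C₀ a b : ℝ} (hα : α ≠ 0)
    (hderiv : ∀ t > 0, HasDerivAt W (W' t) t) (hbd : ∀ t > 0, W' t ≤ C₀ * t ^ (α - 1))
    (ha : 0 < a) (hab : a ≤ b) : W b - W a ≤ C₀ / α * (b ^ α - a ^ α) := by
  have hpow : ∀ t > (0 : ℝ), HasDerivAt (fun t => C₀ / α * t ^ α) (C₀ * t ^ (α - 1)) t :=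
    fun t ht => ((Real.hasDerivAt_rpow_const (Or.inl ht.ne')).const_mul (C₀ / α)).congr_deriv
      (by field_simp)
  rw [mul_sub]
  exact sub_le_sub_of_hasDerivAt_le (convex_Ioi 0) isOpen_Ioi hderiv hpow hbd ha
    (ha.trans_le hab) hab

theorem rpow_sub_rpow_le_rpow_sub {a b α : ℝ} (ha : 0 ≤ a) (hab : a ≤ b) (hα : 0 ≤ α)
    (hα1 : α ≤ 1) : b ^ α - a ^ α ≤ (b - a) ^ α := by
  have := Real.rpow_add_le_add_rpow ha (sub_nonneg.2 hab) hα hα1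
  rw [add_sub_cancel] at this
  linarith

theorem abs_sub_le_div_mul_rpow_of_deriv_le {W W' : ℝ → ℝ} {α C₀ a b : ℝ} (hα : 0 < α)
    (hα1 : α ≤ 1) (hC₀ : 0 ≤ C₀) (hderiv : ∀ t > 0, HasDerivAt W (W' t) t)
    (hnn : ∀ t > 0, 0 ≤ W' t) (hbd : ∀ t > 0, W' t ≤ C₀ * t ^ (α - 1)) (ha : 0 < a)
    (hab : a ≤ b) : |W b - W a| ≤ C₀ / α * (b - a) ^ α := by
  have hmono : MonotoneOn W (Ioi 0) := by
    refine monotoneOn_of_hasDerivWithinAt_nonneg (convex_Ioi 0) (f' := W')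
      (fun x hx => (hderiv x hx).continuousAt.continuousWithinAt) ?_ ?_ <;> rw [interior_Ioi]
    exacts [fun x hx => (hderiv x hx).hasDerivWithinAt, hnn]
  rw [abs_of_nonneg (sub_nonneg.2 (hmono ha (ha.trans_le hab) hab))]
  exact (sub_le_mul_rpow_sub_rpow_of_deriv_le hα.ne' hderiv hbd ha hab).trans
    (mul_le_mul_of_nonneg_left (rpow_sub_rpow_le_rpow_sub ha.le hab hα.le hα1) (by positivity))

theorem measurable_of_continuousOn_Ioi_of_eq_zero {W : ℝ → ℝ} (hc : ContinuousOn W (Ioi 0))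
    (hzero : ∀ x ≤ 0, W x = 0) : Measurable W := by
  have : (Ioi 0).piecewise W 0 = W := funext fun x => by
    by_cases hx : 0 < x
    · simp [hx]
    · simp [hx, hzero x (not_lt.1 hx)]
  exact this ▸ hc.measurable_piecewise continuousOn_const measurableSet_Ioi

theorem abs_sub_le_mul_rpow_of_abs_le_mul_rpow {W : ℝ → ℝ} {K α : ℝ} (hW0 : W 0 = 0) (hK : 0 ≤ K)
    (hW : ∀ a b, 0 < a → a ≤ b → |W b - W a| ≤ K * (b - a) ^ α)
    (hsmall : ∀ t > 0, |W t| ≤ K * t ^ α) {a b : ℝ} (ha : 0 ≤ a) (hab : a ≤ b) :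
    |W b - W a| ≤ K * (b - a) ^ α := by
  rcases ha.eq_or_lt with rfl | ha
  · rcases hab.eq_or_lt with rfl | hb
    · rw [sub_self, abs_zero, sub_self]
      exact mul_nonneg hK (Real.rpow_nonneg le_rfl α)
    · rw [hW0, sub_zero, sub_zero]
      exact hsmall b hb
  · exact hW a b ha hab

theorem integral_rpow_le_of_lt_neg_one {a b r : ℝ} (ha : 0 < a) (hab : a ≤ b) (hr : r < -1) :
    ∫ y in a..b, y ^ r ≤ a ^ (r + 1) / (-r - 1) := by
  have h0 : (0 : ℝ) ∉ uIcc a b := by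
    rw [uIcc_of_le hab]
    exact fun h => ha.not_ge h.1
  rw [integral_rpow (Or.inr ⟨hr.ne, h0⟩), sub_div]
  have : b ^ (r + 1) / (r + 1) ≤ 0 :=
    div_nonpos_of_nonneg_of_nonpos (Real.rpow_nonneg (ha.le.trans hab) _) (by linarith)
  rw [show -r - 1 = -(r + 1) by ring, div_neg]
  linarith

theorem not_intervalIntegrable_of_eventually_mul_rpow_le {g : ℝ → ℝ} {c r b : ℝ} (hc : 0 < c)
    (hr : r ≤ -1) (hb : 0 < b) (hg : ∀ᶠ s in 𝓝[>] 0, c * s ^ r ≤ g s) :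
    ¬ IntervalIntegrable g volume 0 b := by
  intro hint
  obtain ⟨ε, hε, hεg⟩ := (nhdsGT_basis (0 : ℝ)).eventually_iff.1 hg
  have hε' : 0 < min ε b := lt_min hε hb
  have hgi : IntegrableOn g (Ioo 0 (min ε b)) :=
    (intervalIntegrable_iff_integrableOn_Ioo_of_le hε'.le).1 <| hint.mono_set <| by
      rw [uIcc_of_le hε'.le, uIcc_of_le hb.le]
      exact Icc_subset_Icc le_rfl (min_le_right _ _)
  have hpow : IntegrableOn (fun s => c * s ^ r) (Ioo 0 (min ε b)) := by
    refine Integrable.mono' hgi ((measurable_id.pow_const r).const_mul c).aestronglyMeasurable ?_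
    filter_upwards [ae_restrict_mem measurableSet_Ioo] with s hs
    rw [Real.norm_eq_abs, abs_of_nonneg (mul_nonneg hc.le (Real.rpow_nonneg hs.1.le r))]
    exact hεg ⟨hs.1, hs.2.trans_le (min_le_left _ _)⟩
  have := (integrableOn_Ioo_rpow_iff hε').1 <| IntegrableOn.congr_fun (hpow.const_mul c⁻¹)
    (fun s _ => by field_simp) measurableSet_Ioo
  linarith

noncomputable def mixedIncrementIntegrand (W : ℝ → ℝ) (α p h s y : ℝ) : ℝ :=
  |W (s + h) - W (s + h - y) - W s| ^ p * y ^ (-α - 2)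

section MixedIncrement

variable {W : ℝ → ℝ} {K α p γ h s y c t₀ : ℝ}

theorem abs_mixedIncrement_le_lag (hW0 : W 0 = 0)
    (hW : ∀ a b, 0 ≤ a → a ≤ b → |W b - W a| ≤ K * (b - a) ^ α) (hK : 0 ≤ K) (hα : 0 ≤ α)
    (hs : 0 ≤ s) (hsy : s ≤ y) (hy : y ≤ s + h) :
    |W (s + h) - W (s + h - y) - W s| ≤ 2 * K * y ^ α := by
  have hleft := hW (s + h - y) (s + h) (by linarith) (by linarith)
  have hright := hW 0 s le_rfl hs
  rw [sub_sub_cancel] at hleft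
  rw [hW0, sub_zero, sub_zero] at hright
  have : K * s ^ α ≤ K * y ^ α := by gcongr
  calc |W (s + h) - W (s + h - y) - W s|
      ≤ |W (s + h) - W (s + h - y)| + |W s| := abs_sub _ _
    _ ≤ 2 * K * y ^ α := by linarith

theorem abs_mixedIncrement_le_step (hW0 : W 0 = 0)
    (hW : ∀ a b, 0 ≤ a → a ≤ b → |W b - W a| ≤ K * (b - a) ^ α) (hK : 0 ≤ K) (hα : 0 ≤ α)
    (hh : 0 ≤ h) (hhs : h ≤ s) (hsy : s ≤ y) (hy : y ≤ s + h) :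
    |W (s + h) - W (s + h - y) - W s| ≤ 2 * K * h ^ α := by
  have hstep := hW s (s + h) (by linarith) (by linarith)
  have hlow := hW 0 (s + h - y) le_rfl (by linarith)
  rw [add_sub_cancel_left] at hstep
  rw [hW0, sub_zero, sub_zero] at hlow
  have : K * (s + h - y) ^ α ≤ K * h ^ α := by gcongr; linarith
  calc |W (s + h) - W (s + h - y) - W s|
      = |(W (s + h) - W s) - W (s + h - y)| := by ring_nf
    _ ≤ |W (s + h) - W s| + |W (s + h - y)| := abs_sub _ _
    _ ≤ 2 * K * h ^ α := by linarith

theorem intervalIntegrable_mixedIncrementIntegrand (hWm : Measurable W) (hW0 : W 0 = 0)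
    (hW : ∀ a b, 0 < a → a ≤ b → |W b - W a| ≤ K * (b - a) ^ α) (hK : 0 ≤ K) (hα : 0 ≤ α)
    (hp : 0 ≤ p) (hs : 0 < s) (hh : 0 ≤ h) :
    IntervalIntegrable (mixedIncrementIntegrand W α p h s) volume s (s + h) := by
  set M := |W (s + h)| + K * (s + h) ^ α
  have hbdd : ∀ t ∈ Icc 0 (s + h), |W t| ≤ M := by
    rintro t ⟨ht0, hts⟩
    rcases ht0.eq_or_lt with rfl | ht0
    · rw [hW0, abs_zero]
      positivity
    · have : K * (s + h - t) ^ α ≤ K * (s + h) ^ α := by gcongr; linarith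
      linarith [hW t (s + h) ht0 hts, abs_sub_abs_le_abs_sub (W t) (W (s + h)),
        abs_sub_comm (W t) (W (s + h))]
  have hcont : ContinuousOn (fun y : ℝ => y ^ (-α - 2)) (uIcc s (s + h)) := by
    rw [uIcc_of_le (by linarith)]
    exact fun y hy => (Real.continuousAt_rpow_const _ _
      (Or.inl (hs.trans_le hy.1).ne')).continuousWithinAt
  refine IntervalIntegrable.mul_continuousOn ?_ hcont
  refine IntervalIntegrable.mono_fun' (g := fun _ => (3 * M) ^ p) intervalIntegrable_const
    ?_ ?_
  · exact (((measurable_const.sub (hWm.comp (measurable_const.sub measurable_id))).sub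
      measurable_const).abs.pow_const p).aestronglyMeasurable
  · rw [EventuallyLE, ae_restrict_iff' measurableSet_uIoc]
    refine .of_forall fun y hy => ?_
    rw [uIoc_of_le (by linarith)] at hy
    rw [Real.norm_eq_abs, abs_of_nonneg (by positivity)]
    refine Real.rpow_le_rpow (abs_nonneg _) ?_ hp
    have h1 := hbdd (s + h) ⟨by linarith, le_rfl⟩
    have h2 := hbdd (s + h - y) ⟨by linarith [hy.2], by linarith [hy.1]⟩
    have h3 := hbdd s ⟨hs.le, by linarith⟩
    linarith [abs_sub (W (s + h) - W (s + h - y)) (W s), abs_sub (W (s + h)) (W (s + h - y))]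

theorem mixedIncrementIntegrand_le_of_le_step (hW0 : W 0 = 0)
    (hW : ∀ a b, 0 ≤ a → a ≤ b → |W b - W a| ≤ K * (b - a) ^ α) (hK : 0 ≤ K) (hα : 0 ≤ α)
    (hp : 0 ≤ p) (hγβ : γ ≤ (p - 1) * α) (hs : 0 < s) (hsh : s ≤ h) (hy : y ∈ Icc s (s + h)) :
    mixedIncrementIntegrand W α p h s y ≤
      (2 * K) ^ p * (2 * h) ^ ((p - 1) * α - γ) * y ^ (γ - 2) := by
  obtain ⟨hsy, hys⟩ := hy
  have hy0 : 0 < y := hs.trans_le hsy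
  have hD := abs_mixedIncrement_le_lag hW0 hW hK hα hs.le hsy hys
  calc mixedIncrementIntegrand W α p h s y ≤ (2 * K * y ^ α) ^ p * y ^ (-α - 2) := by
        unfold mixedIncrementIntegrand
        gcongr
    _ = (2 * K) ^ p * (y ^ ((p - 1) * α - γ) * y ^ (γ - 2)) := by
        rw [← Real.rpow_add hy0, Real.mul_rpow (by positivity) (by positivity),
          ← Real.rpow_mul hy0.le, mul_assoc, ← Real.rpow_add hy0]
        ring_nf
    _ ≤ (2 * K) ^ p * (2 * h) ^ ((p - 1) * α - γ) * y ^ (γ - 2) := by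
        rw [← mul_assoc]
        gcongr
        linarith

theorem mixedIncrementIntegrand_le_of_step_le (hW0 : W 0 = 0)
    (hW : ∀ a b, 0 ≤ a → a ≤ b → |W b - W a| ≤ K * (b - a) ^ α) (hK : 0 ≤ K) (hα : 0 ≤ α)
    (hp : 0 ≤ p) (hh : 0 < h) (hhs : h ≤ s) (hy : y ∈ Icc s (s + h)) :
    mixedIncrementIntegrand W α p h s y ≤ (2 * K * h ^ α) ^ p * s ^ (-α - 2) := by
  obtain ⟨hsy, hys⟩ := hy
  have hD := abs_mixedIncrement_le_step hW0 hW hK hα hh.le hhs hsy hys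
  exact mul_le_mul (Real.rpow_le_rpow (abs_nonneg _) hD hp)
    (Real.rpow_le_rpow_of_nonpos (hh.trans_le hhs) hsy (by linarith))
    (Real.rpow_nonneg (by linarith) _) (by positivity)

theorem integral_mixedIncrementIntegrand_le_of_le_step (hWm : Measurable W) (hW0 : W 0 = 0)
    (hW : ∀ a b, 0 ≤ a → a ≤ b → |W b - W a| ≤ K * (b - a) ^ α) (hK : 0 ≤ K) (hα : 0 ≤ α)
    (hp : 0 ≤ p) (hγ1 : γ < 1) (hγβ : γ ≤ (p - 1) * α) (hs : 0 < s) (hsh : s ≤ h) :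
    ∫ y in s..s + h, mixedIncrementIntegrand W α p h s y ≤
      (2 * K) ^ p * (2 * h) ^ ((p - 1) * α - γ) / (1 - γ) * s ^ (γ - 1) := by
  set A := (2 * K) ^ p * (2 * h) ^ ((p - 1) * α - γ)
  have h0 : (0 : ℝ) ∉ uIcc s (s + h) := by
    rw [uIcc_of_le (by linarith)]
    exact fun h0 => hs.not_ge h0.1
  calc ∫ y in s..s + h, mixedIncrementIntegrand W α p h s y
      ≤ ∫ y in s..s + h, A * y ^ (γ - 2) :=
        integral_mono_on (by linarith)
          (intervalIntegrable_mixedIncrementIntegrand hWm hW0 (fun a b ha => hW a b ha.le)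
            hK hα hp hs (by linarith))
          ((intervalIntegrable_rpow (Or.inr h0)).const_mul A)
          fun y hy => mixedIncrementIntegrand_le_of_le_step hW0 hW hK hα hp hγβ hs hsh hy
    _ = A * ∫ y in s..s + h, y ^ (γ - 2) := integral_const_mul _ _
    _ ≤ A * (s ^ (γ - 2 + 1) / (-(γ - 2) - 1)) :=
        mul_le_mul_of_nonneg_left (integral_rpow_le_of_lt_neg_one hs (by linarith) (by linarith))
          (mul_nonneg (Real.rpow_nonneg (by linarith) _) (Real.rpow_nonneg (by linarith) _))
    _ = A / (1 - γ) * s ^ (γ - 1) := by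
        rw [show γ - 2 + 1 = γ - 1 by ring, show -(γ - 2) - 1 = 1 - γ by ring]
        ring

theorem integral_mixedIncrementIntegrand_le_of_step_le (hWm : Measurable W) (hW0 : W 0 = 0)
    (hW : ∀ a b, 0 ≤ a → a ≤ b → |W b - W a| ≤ K * (b - a) ^ α) (hK : 0 ≤ K) (hα : 0 ≤ α)
    (hp : 0 ≤ p) (hh : 0 < h) (hhs : h ≤ s) :
    ∫ y in s..s + h, mixedIncrementIntegrand W α p h s y ≤
      (2 * K * h ^ α) ^ p * h * s ^ (-α - 2) := by
  calc ∫ y in s..s + h, mixedIncrementIntegrand W α p h s y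
      ≤ ∫ _ in s..s + h, (2 * K * h ^ α) ^ p * s ^ (-α - 2) :=
        integral_mono_on (by linarith)
          (intervalIntegrable_mixedIncrementIntegrand hWm hW0 (fun a b ha => hW a b ha.le)
            hK hα hp (hh.trans_le hhs) hh.le)
          intervalIntegrable_const
          fun y hy => mixedIncrementIntegrand_le_of_step_le hW0 hW hK hα hp hh hhs hy
    _ = (2 * K * h ^ α) ^ p * h * s ^ (-α - 2) := by
        rw [intervalIntegral.integral_const, smul_eq_mul]
        ring

theorem integral_zero_step_integral_mixedIncrementIntegrand_le (hWm : Measurable W)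
    (hW0 : W 0 = 0) (hW : ∀ a b, 0 ≤ a → a ≤ b → |W b - W a| ≤ K * (b - a) ^ α) (hK : 0 ≤ K)
    (hα : 0 ≤ α) (hp : 0 ≤ p) (hγ : 0 < γ) (hγ1 : γ < 1) (hγβ : γ ≤ (p - 1) * α) (hh : 0 < h)
    (hint : IntervalIntegrable (fun s => ∫ y in s..s + h, mixedIncrementIntegrand W α p h s y)
      volume 0 h) :
    ∫ s in (0 : ℝ)..h, ∫ y in s..s + h, mixedIncrementIntegrand W α p h s y ≤
      (2 * K) ^ p * 2 ^ ((p - 1) * α - γ) / (γ * (1 - γ)) * h ^ ((p - 1) * α) := by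
  set β := (p - 1) * α
  set A := (2 * K) ^ p * (2 * h) ^ (β - γ) / (1 - γ) with hA
  calc ∫ s in (0 : ℝ)..h, ∫ y in s..s + h, mixedIncrementIntegrand W α p h s y
      ≤ ∫ s in (0 : ℝ)..h, A * s ^ (γ - 1) :=
        integral_mono_on_of_le_Ioo hh.le hint
          ((intervalIntegrable_rpow' (by linarith)).const_mul A)
          fun s hs => integral_mixedIncrementIntegrand_le_of_le_step hWm hW0 hW hK hα hp
            hγ1 hγβ hs.1 hs.2.le
    _ = A * (h ^ γ / γ) := by
        rw [intervalIntegral.integral_const_mul, integral_rpow (Or.inl (by linarith)),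
          sub_add_cancel, Real.zero_rpow hγ.ne', sub_zero]
    _ = (2 * K) ^ p * 2 ^ (β - γ) / (γ * (1 - γ)) * h ^ β := by
        have : h ^ β = h ^ (β - γ) * h ^ γ := by rw [← Real.rpow_add hh, sub_add_cancel]
        rw [hA, Real.mul_rpow zero_le_two hh.le, this]
        field_simp

theorem integral_step_one_integral_mixedIncrementIntegrand_le (hWm : Measurable W)
    (hW0 : W 0 = 0) (hW : ∀ a b, 0 ≤ a → a ≤ b → |W b - W a| ≤ K * (b - a) ^ α) (hK : 0 ≤ K)
    (hα : 0 < α) (hp : 0 ≤ p) (hh : 0 < h) (hh1 : h ≤ 1)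
    (hint : IntervalIntegrable (fun s => ∫ y in s..s + h, mixedIncrementIntegrand W α p h s y)
      volume h 1) :
    ∫ s in h..1, ∫ y in s..s + h, mixedIncrementIntegrand W α p h s y ≤
      (2 * K) ^ p / (α + 1) * h ^ ((p - 1) * α) := by
  set B := (2 * K * h ^ α) ^ p * h with hB
  have h0 : (0 : ℝ) ∉ uIcc h 1 := by
    rw [uIcc_of_le hh1]
    exact fun h0 => hh.not_ge h0.1
  calc ∫ s in h..1, ∫ y in s..s + h, mixedIncrementIntegrand W α p h s y
      ≤ ∫ s in h..1, B * s ^ (-α - 2) :=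
        integral_mono_on hh1 hint ((intervalIntegrable_rpow (Or.inr h0)).const_mul B)
          fun s hs => integral_mixedIncrementIntegrand_le_of_step_le hWm hW0 hW hK hα.le hp
            hh hs.1
    _ = B * ∫ s in h..1, s ^ (-α - 2) := integral_const_mul _ _
    _ ≤ B * (h ^ (-α - 2 + 1) / (-(-α - 2) - 1)) :=
        mul_le_mul_of_nonneg_left (integral_rpow_le_of_lt_neg_one hh hh1 (by linarith))
          (by positivity)
    _ = (2 * K) ^ p / (α + 1) * h ^ ((p - 1) * α) := by
        have : (h ^ α) ^ p * h * h ^ (-α - 2 + 1) = h ^ ((p - 1) * α) := by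
          rw [← Real.rpow_mul hh.le, ← Real.rpow_add_one hh.ne', ← Real.rpow_add hh]
          ring_nf
        rw [show -(-α - 2) - 1 = α + 1 by ring, ← this, hB,
          Real.mul_rpow (by positivity) (by positivity)]
        ring

theorem integral_integral_mixedIncrementIntegrand_le (hWm : Measurable W) (hW0 : W 0 = 0)
    (hW : ∀ a b, 0 ≤ a → a ≤ b → |W b - W a| ≤ K * (b - a) ^ α) (hK : 0 ≤ K) (hα : 0 < α)
    (hp : 0 ≤ p) (hγ : 0 < γ) (hγ1 : γ < 1) (hγβ : γ ≤ (p - 1) * α) (hh : 0 < h)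
    (hh1 : h ≤ 1) :
    ∫ s in (0 : ℝ)..1, ∫ y in s..s + h, mixedIncrementIntegrand W α p h s y ≤
      (2 * K) ^ p * (2 ^ ((p - 1) * α - γ) / (γ * (1 - γ)) + 1 / (α + 1)) *
        h ^ ((p - 1) * α) := by
  by_cases hint : IntervalIntegrable
      (fun s => ∫ y in s..s + h, mixedIncrementIntegrand W α p h s y) volume 0 1
  swap
  · rw [integral_undef hint]
    have : 0 < 1 - γ := by linarith
    positivity
  have hh01 : h ∈ uIcc (0 : ℝ) 1 := by
    rw [uIcc_of_le zero_le_one]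
    exact ⟨hh.le, hh1⟩
  have hint₁ := hint.mono_set (uIcc_subset_uIcc left_mem_uIcc hh01)
  have hint₂ := hint.mono_set (uIcc_subset_uIcc hh01 right_mem_uIcc)
  rw [← integral_add_adjacent_intervals hint₁ hint₂]
  calc _ ≤ _ := add_le_add
        (integral_zero_step_integral_mixedIncrementIntegrand_le hWm hW0 hW hK hα.le hp hγ hγ1
          hγβ hh hint₁)
        (integral_step_one_integral_mixedIncrementIntegrand_le hWm hW0 hW hK hα hp hh hh1 hint₂)
    _ = _ := by ring

theorem exists_integral_integral_mixedIncrementIntegrand_le (hWm : Measurable W)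
    (hW0 : W 0 = 0) (hW : ∀ a b, 0 ≤ a → a ≤ b → |W b - W a| ≤ K * (b - a) ^ α) (hK : 0 < K)
    (hα : 0 < α) (hp : 1 < p) :
    ∃ C > 0, ∀ h : ℝ, 0 < h → h ≤ 1 →
      ∫ s in (0 : ℝ)..1, ∫ y in s..s + h, mixedIncrementIntegrand W α p h s y ≤
        C * h ^ ((p - 1) * α) := by
  set β := (p - 1) * α
  have hβ : 0 < β := mul_pos (by linarith) hα
  set γ := β / (β + 1)
  have hγ1 : γ < 1 := (div_lt_one (by linarith)).2 (by linarith)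
  have h1γ : 0 < 1 - γ := by linarith
  refine ⟨_, ?_, fun h hh hh1 => integral_integral_mixedIncrementIntegrand_le hWm hW0 hW hK.le
    hα (by linarith) (by positivity) hγ1 (div_le_self hβ.le (by linarith)) hh hh1⟩
  positivity

theorem mul_rpow_le_integral_mixedIncrementIntegrand
    (hint : IntervalIntegrable (mixedIncrementIntegrand W α p h s) volume s (s + h))
    (hα : 0 ≤ α) (hp : 0 ≤ p) (hc : 0 ≤ c) (hs : 0 < s) (hsh : s ≤ h)
    (hD : ∀ y ∈ Icc s (2 * s), c ≤ |W (s + h) - W (s + h - y) - W s|) :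
    c ^ p * 2 ^ (-α - 2) * s ^ (-α - 1) ≤
      ∫ y in s..s + h, mixedIncrementIntegrand W α p h s y := by
  have hpt : ∀ y ∈ Icc s (2 * s),
      c ^ p * (2 * s) ^ (-α - 2) ≤ mixedIncrementIntegrand W α p h s y :=
    fun y hy => mul_le_mul (Real.rpow_le_rpow hc (hD y hy) hp)
      (Real.rpow_le_rpow_of_nonpos (hs.trans_le hy.1) hy.2 (by linarith)) (by positivity)
      (by positivity)
  have hnonneg : 0 ≤ᵐ[volume.restrict (Ioc s (s + h))] mixedIncrementIntegrand W α p h s := by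
    filter_upwards [ae_restrict_mem measurableSet_Ioc] with y hy
    exact mul_nonneg (by positivity) (Real.rpow_nonneg (hs.trans hy.1).le _)
  calc c ^ p * 2 ^ (-α - 2) * s ^ (-α - 1) = ∫ _ in s..2 * s, c ^ p * (2 * s) ^ (-α - 2) := by
        rw [intervalIntegral.integral_const, smul_eq_mul, Real.mul_rpow zero_le_two hs.le,
          show -α - 1 = -α - 2 + 1 by ring, Real.rpow_add_one hs.ne']
        ring
    _ ≤ ∫ y in s..2 * s, mixedIncrementIntegrand W α p h s y :=
        integral_mono_on (by linarith) intervalIntegrable_const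
          (hint.mono_set (uIcc_subset_uIcc left_mem_uIcc (by
            rw [uIcc_of_le (by linarith)]; constructor <;> linarith))) hpt
    _ ≤ ∫ y in s..s + h, mixedIncrementIntegrand W α p h s y :=
        integral_mono_interval le_rfl (by linarith) (by linarith) hnonneg hint

theorem eventually_mul_rpow_le_integral_mixedIncrementIntegrand (hWm : Measurable W)
    (hW0 : W 0 = 0) (hW : ∀ a b, 0 < a → a ≤ b → |W b - W a| ≤ K * (b - a) ^ α) (hK : 0 ≤ K)
    (hα : 0 < α) (hp : 0 ≤ p) (hh : 0 < h) (ht₀ : 0 < t₀) (hbig : K * t₀ ^ α < |W t₀|) :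
    ∀ᶠ s in 𝓝[>] 0, ((|W t₀| - K * t₀ ^ α) / 2) ^ p * 2 ^ (-α - 2) * s ^ (-α - 1) ≤
      ∫ y in s..s + h, mixedIncrementIntegrand W α p h s y := by
  set δ := |W t₀| - K * t₀ ^ α
  have hδ : 0 < δ := by linarith
  have hsmall : ∀ᶠ s in 𝓝 (0 : ℝ), K * (2 * s) ^ α < δ / 2 := by
    have hcont : Continuous fun s : ℝ => K * (2 * s) ^ α :=
      continuous_const.mul ((continuous_const.mul continuous_id).rpow_const fun _ => Or.inr hα.le)
    refine hcont.continuousAt.eventually (eventually_lt_nhds ?_)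
    simp only [mul_zero, Real.zero_rpow hα.ne']
    linarith
  filter_upwards [self_mem_nhdsWithin, nhdsWithin_le_nhds hsmall,
    nhdsWithin_le_nhds (eventually_lt_nhds (lt_min ht₀ hh))] with s (hs : 0 < s) hsK hst
  have hst₀ : s ≤ t₀ := hst.le.trans (min_le_left _ _)
  have hsh : s < h := hst.trans_le (min_le_right _ _)
  refine mul_rpow_le_integral_mixedIncrementIntegrand
    (intervalIntegrable_mixedIncrementIntegrand hWm hW0 hW hK hα.le hp hs hh.le) hα.le hp
    (by positivity) hs hsh.le fun y ⟨hsy, hys⟩ => ?_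
  have hWs : δ ≤ |W s| := by
    have : K * (t₀ - s) ^ α ≤ K * t₀ ^ α := by gcongr; linarith
    linarith [hW s t₀ hs hst₀, abs_sub_abs_le_abs_sub (W t₀) (W s)]
  have hincr : |W (s + h) - W (s + h - y)| ≤ δ / 2 := by
    have h1 := hW (s + h - y) (s + h) (by linarith) (by linarith)
    rw [sub_sub_cancel] at h1
    have : K * y ^ α ≤ K * (2 * s) ^ α := by gcongr; linarith
    linarith
  linarith [abs_sub_abs_le_abs_sub (W s) (W (s + h) - W (s + h - y)),
    abs_sub_comm (W s) (W (s + h) - W (s + h - y))]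

theorem not_intervalIntegrable_integral_mixedIncrementIntegrand (hWm : Measurable W)
    (hW0 : W 0 = 0) (hW : ∀ a b, 0 < a → a ≤ b → |W b - W a| ≤ K * (b - a) ^ α) (hK : 0 ≤ K)
    (hα : 0 < α) (hp : 0 ≤ p) (hh : 0 < h) (ht₀ : 0 < t₀) (hbig : K * t₀ ^ α < |W t₀|) :
    ¬ IntervalIntegrable (fun s => ∫ y in s..s + h, mixedIncrementIntegrand W α p h s y)
      volume 0 1 := by
  have : 0 < |W t₀| - K * t₀ ^ α := by linarith
  exact not_intervalIntegrable_of_eventually_mul_rpow_le (by positivity) (by linarith) one_pos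
    (eventually_mul_rpow_le_integral_mixedIncrementIntegrand hWm hW0 hW hK hα hp hh ht₀ hbig)

end MixedIncrement

theorem scale_function_mixed_increment_integral_bound
    (α C₀ : ℝ) (hα : 0 < α) (hα1 : α < 1) (hC₀ : 0 < C₀)
    (W₀ W₀' : ℝ → ℝ) (hzero : ∀ x ≤ (0:ℝ), W₀ x = 0)
    (hderiv : ∀ t > (0:ℝ), HasDerivAt W₀ (W₀' t) t)
    (hnn : ∀ t > (0:ℝ), 0 ≤ W₀' t)
    (hbd : ∀ t > (0:ℝ), W₀' t ≤ C₀ * t ^ (α - 1)) :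
    ∀ p ≥ (2:ℝ), ∃ C > (0:ℝ), ∀ h : ℝ, 0 < h → h ≤ 1 →
      (∫ s in (0:ℝ)..1, ∫ y in s..(s + h),
        |W₀ (s + h) - W₀ (s + h - y) - W₀ s| ^ p * y ^ (-α - 2))
      ≤ C * h ^ ((p - 1) * α) := by
  intro p hp
  have hK : 0 < C₀ / α := div_pos hC₀ hα
  have hW0 : W₀ 0 = 0 := hzero 0 le_rfl
  have hW : ∀ a b, 0 < a → a ≤ b → |W₀ b - W₀ a| ≤ C₀ / α * (b - a) ^ α := fun _ _ ha hab =>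
    abs_sub_le_div_mul_rpow_of_deriv_le hα hα1.le hC₀.le hderiv hnn hbd ha hab
  have hWm : Measurable W₀ := measurable_of_continuousOn_Ioi_of_eq_zero
    (fun x hx => (hderiv x hx).continuousAt.continuousWithinAt) hzero
  by_cases hsmall : ∀ t > 0, |W₀ t| ≤ C₀ / α * t ^ α
  · exact exists_integral_integral_mixedIncrementIntegrand_le hWm hW0
      (fun _ _ ha hab => abs_sub_le_mul_rpow_of_abs_le_mul_rpow hW0 hK.le hW hsmall ha hab)
      hK hα (by linarith)
  · push Not at hsmall
    obtain ⟨t₀, ht₀, hbig⟩ := hsmall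
    refine ⟨1, one_pos, fun h hh _ => ?_⟩
    exact (integral_undef (not_intervalIntegrable_integral_mixedIncrementIntegrand hWm hW0 hW
      hK.le hα (by linarith) hh ht₀ hbig)).trans_le (by positivity)
end
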